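/- Let h(x,t) = x + σ²(t)s(x,t) with σ² differentiable, g² = dσ²/dt. If s satisfies ∂ₜs = (1/2)g²(t)Δₓs + g²(t)(Jac_x s)·s, then ∂ₜh = g²(t)s + σ²(t)((1/2)g²(t)Δₓs + g²(t)(Jac_x s)·s), and substituting Δₓs = Δₓh/σ²(t) and Jac_x s = (Jac_x h − I)/σ²(t) yields ∂ₜh = (1/2)g²(t)Δₓh + g²(t)(Jac_x h)·s. -/

import Mathlib

open Finset Set

/-- Partial derivative in the `j`-th coordinate. -/
noncomputable def pd {D : ℕ} (j : Fin D) (f : (Fin D → ℝ) → ℝ) (x : Fin D → ℝ) : ℝ :=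
  fderiv ℝ f x (Pi.single j 1)

/-- Componentwise Laplacian in `x` of a vector field. -/
noncomputable def vecLap {D : ℕ} (F : (Fin D → ℝ) → (Fin D → ℝ)) (x : Fin D → ℝ) :
    Fin D → ℝ :=
  fun i => ∑ j, pd j (fun y => pd j (fun z => F z i) y) x

/-- Jacobian in `x` of a vector field applied to a vector: `(Jac_x F)(x) · v`. -/
noncomputable def jacMul {D : ℕ} (F : (Fin D → ℝ) → (Fin D → ℝ)) (x v : Fin D → ℝ) :
    Fin D → ℝ :=
  fderiv ℝ F x v

lemma pd_smooth {D : ℕ} (j : Fin D) {f : (Fin D → ℝ) → ℝ} (hf : ContDiff ℝ (⊤ : ℕ∞) f) :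
    ContDiff ℝ (⊤ : ℕ∞) (pd j f) := by
  unfold pd
  exact (hf.fderiv_right (by simp)).clm_apply contDiff_const

lemma pd_add {D : ℕ} (j : Fin D) {f g : (Fin D → ℝ) → ℝ} {y : Fin D → ℝ}
    (hf : DifferentiableAt ℝ f y) (hg : DifferentiableAt ℝ g y) :
    pd j (fun z => f z + g z) y = pd j f y + pd j g y := by
  unfold pd
  rw [fderiv_fun_add hf hg]; rfl

lemma pd_const {D : ℕ} (j : Fin D) (c : ℝ) (y : Fin D → ℝ) :
    pd j (fun _ => c) y = 0 := by
  unfold pd; simp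

lemma pd_const_mul {D : ℕ} (j : Fin D) {f : (Fin D → ℝ) → ℝ} {y : Fin D → ℝ}
    (hf : DifferentiableAt ℝ f y) (c : ℝ) :
    pd j (fun z => c * f z) y = c * pd j f y := by
  unfold pd
  rw [fderiv_const_mul hf]; rfl

lemma pd_coord {D : ℕ} (j i : Fin D) (y : Fin D → ℝ) :
    pd j (fun z : Fin D → ℝ => z i) y = (Pi.single j 1 : Fin D → ℝ) i := by
  unfold pd
  rw [show (fun z : Fin D → ℝ => z i) = ⇑(ContinuousLinearMap.proj (R := ℝ) (φ := fun _ : Fin D => ℝ) i) from rfl,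
    ContinuousLinearMap.fderiv]
  rfl

example {D : ℕ} (c : ℝ) (F : (Fin D → ℝ) → (Fin D → ℝ)) (x v : Fin D → ℝ)
    (hF : DifferentiableAt ℝ F x) :
    jacMul (fun y => y + c • F y) x v = v + c • jacMul F x v := by
  unfold jacMul
  have h1 : HasFDerivAt (fun y => y + c • F y)
      (ContinuousLinearMap.id ℝ (Fin D → ℝ) + c • fderiv ℝ F x) x :=
    (hasFDerivAt_id x).add (hF.hasFDerivAt.const_smul c)
  rw [h1.fderiv]; rfl

lemma jacMul_shift {D : ℕ} (c : ℝ) (F : (Fin D → ℝ) → (Fin D → ℝ)) (x v : Fin D → ℝ)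
    (hF : DifferentiableAt ℝ F x) :
    jacMul (fun y => y + c • F y) x v = v + c • jacMul F x v := by
  unfold jacMul
  have h1 : HasFDerivAt (fun y => y + c • F y)
      (ContinuousLinearMap.id ℝ (Fin D → ℝ) + c • fderiv ℝ F x) x :=
    (hasFDerivAt_id x).add (hF.hasFDerivAt.const_smul c)
  rw [h1.fderiv]; rfl

/-- With `h(x,t) = x + σ²(t) s(x,t)`, `g² = dσ²/dt`, if `s` satisfies
`∂ₜs = ½ g² Δₓs + g² (Jac_x s)·s`, then
`∂ₜh = g² s + σ² (½ g² Δₓs + g² (Jac_x s)·s)`, and after substituting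
`Δₓs = Δₓh/σ²` and `Jac_x s = (Jac_x h − I)/σ²` one obtains
`∂ₜh = ½ g² Δₓh + g² (Jac_x h)·s`. -/
theorem stmt10 {D : ℕ} (t0 T : ℝ) (ht0T : t0 ≤ T) (σsq g : ℝ → ℝ)
    (hσ : Differentiable ℝ σsq)
    (hg : ∀ t ∈ Set.Icc t0 T, (g t) ^ 2 = deriv σsq t)
    (hσpos : ∀ t : ℝ, t0 < t → t ≤ T → 0 < σsq t)
    (s h : (Fin D → ℝ) → ℝ → (Fin D → ℝ))
    (hs : ContDiff ℝ (⊤ : ℕ∞) (fun p : (Fin D → ℝ) × ℝ => s p.1 p.2))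
    (hh : ContDiff ℝ (⊤ : ℕ∞) (fun p : (Fin D → ℝ) × ℝ => h p.1 p.2))
    (hrel : ∀ (x : Fin D → ℝ) (t : ℝ), h x t = x + σsq t • s x t)
    (hspde : ∀ x : Fin D → ℝ, ∀ t ∈ Set.Icc t0 T,
      deriv (fun τ => s x τ) t
        = ((1 : ℝ) / 2 * (g t) ^ 2) • vecLap (fun y => s y t) x
          + ((g t) ^ 2) • jacMul (fun y => s y t) x (s x t)) :
    ∀ x : Fin D → ℝ, ∀ t ∈ Set.Icc t0 T,
      (deriv (fun τ => h x τ) t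
          = ((g t) ^ 2) • s x t
            + σsq t • (((1 : ℝ) / 2 * (g t) ^ 2) • vecLap (fun y => s y t) x
              + ((g t) ^ 2) • jacMul (fun y => s y t) x (s x t)))
      ∧ (deriv (fun τ => h x τ) t
          = ((1 : ℝ) / 2 * (g t) ^ 2) • vecLap (fun y => h y t) x
            + ((g t) ^ 2) • jacMul (fun y => h y t) x (s x t)) := by
  intro x t ht
  -- smoothness of slices
  have hst : ContDiff ℝ (⊤ : ℕ∞) (fun y => s y t) := hs.comp (contDiff_id.prodMk contDiff_const)
  have hsx : ContDiff ℝ (⊤ : ℕ∞) (fun τ => s x τ) := hs.comp (contDiff_const.prodMk contDiff_id)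
  -- time derivative of h
  have hd : HasDerivAt (fun τ => h x τ)
      ((deriv σsq t) • s x t + σsq t • deriv (fun τ => s x τ) t) t := by
    have heq : (fun τ => h x τ) = fun τ => x + σsq τ • s x τ := funext fun τ => hrel x τ
    rw [heq]
    have h1 : HasDerivAt (fun τ => σsq τ • s x τ)
        ((deriv σsq t) • s x t + σsq t • deriv (fun τ => s x τ) t) t := by
      have := ((hσ t).hasDerivAt).smul ((hsx.differentiable (by simp) t).hasDerivAt)
      rw [add_comm] at this
      exact this
    simpa using (h1.const_add x)
  have key1 : deriv (fun τ => h x τ) t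
      = ((g t) ^ 2) • s x t + σsq t • deriv (fun τ => s x τ) t := by
    rw [hd.deriv, hg t ht]
  have part1 : deriv (fun τ => h x τ) t
      = ((g t) ^ 2) • s x t
        + σsq t • (((1 : ℝ) / 2 * (g t) ^ 2) • vecLap (fun y => s y t) x
          + ((g t) ^ 2) • jacMul (fun y => s y t) x (s x t)) := by
    rw [key1, hspde x t ht]
  refine ⟨part1, ?_⟩
  -- Laplacian of h
  have hlap : vecLap (fun y => h y t) x = σsq t • vecLap (fun y => s y t) x := by
    funext i
    have hsti : ContDiff ℝ (⊤ : ℕ∞) (fun z => s z t i) :=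
      (ContinuousLinearMap.proj (R := ℝ) (φ := fun _ : Fin D => ℝ) i).contDiff.comp hst
    have hinner : ∀ j : Fin D, (fun y => pd j (fun z => h z t i) y)
        = fun y => (Pi.single j 1 : Fin D → ℝ) i + σsq t * pd j (fun z => s z t i) y := by
      intro j
      funext y
      have : (fun z => h z t i) = fun z => z i + σsq t * s z t i := by
        funext z; rw [hrel]; rfl
      rw [this, pd_add j (differentiableAt_apply (𝕜 := ℝ) i y) ((hsti.differentiable (by simp) y).const_mul _),
        pd_coord, pd_const_mul j (hsti.differentiable (by simp) y)]
    simp only [vecLap, Pi.smul_apply, smul_eq_mul, Finset.mul_sum]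
    refine Finset.sum_congr rfl fun j _ => ?_
    rw [hinner j]
    have hpds : ContDiff ℝ (⊤ : ℕ∞) (pd j (fun z => s z t i)) := pd_smooth j hsti
    rw [pd_add j (differentiableAt_const _) ((hpds.differentiable (by simp) x).const_mul _),
      pd_const, pd_const_mul j (hpds.differentiable (by simp) x), zero_add]
  -- Jacobian of h
  have hjac : jacMul (fun y => h y t) x (s x t)
      = s x t + σsq t • jacMul (fun y => s y t) x (s x t) := by
    have : (fun y => h y t) = fun y => y + σsq t • s y t := funext fun y => hrel y t
    rw [this, jacMul_shift _ _ _ _ (hst.differentiable (by simp) x)]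
  rw [part1, hlap, hjac]
  module
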